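/- arXiv:1308.2190 — 2 statements merged into one kernel-verified Lean document; each statement's English description precedes it below -/
import Mathlib

section
/- Let A = (μ_M + β_TM)(β_MT + μ_T), B = β_MT((μ_M + β_TM)^2 + 2 μ_T β_TM) + β_MT^2 β_TM + μ_T^2 β_TM, and C = (μ_M + β_TM)(β_MT + μ_T)(β_MT β_TM − μ_M μ_T), with all parameters positive. If β_MT β_TM > μ_M μ_T, then both roots of A λ^2 + B λ + C = 0 have negative real part. -/
/-- Routh–Hurwitz for the endemic-equilibrium quadratic: if
βMT βTM > μM μT then every complex root of A λ² + B λ + C = 0 has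
negative real part. -/
theorem quadratic_roots_neg_re
    (μM μT βTM βMT : ℝ)
    (hμM : 0 < μM) (hμT : 0 < μT) (hβTM : 0 < βTM) (hβMT : 0 < βMT)
    (hR0 : βMT * βTM > μM * μT)
    (A B C : ℝ)
    (hA : A = (μM + βTM) * (βMT + μT))
    (hB : B = βMT * ((μM + βTM) ^ 2 + 2 * μT * βTM) + βMT ^ 2 * βTM + μT ^ 2 * βTM)
    (hC : C = (μM + βTM) * (βMT + μT) * (βMT * βTM - μM * μT)) :
    ∀ z : ℂ, (A : ℂ) * z ^ 2 + (B : ℂ) * z + (C : ℂ) = 0 → z.re < 0 := by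
  have hApos : 0 < A := by subst hA; positivity
  have hBpos : 0 < B := by subst hB; positivity
  have hCpos : 0 < C := by
    rw [hC]
    have h1 : 0 < βMT * βTM - μM * μT := sub_pos.mpr hR0
    positivity
  intro z hz
  by_contra h
  push_neg at h
  set x := z.re with hx
  set y := z.im with hy
  have hre : A * (x * x - y * y) + B * x + C = 0 := by
    have := congrArg Complex.re hz
    simp [pow_two, Complex.mul_re, Complex.mul_im, Complex.add_re] at this
    linarith [this]
  have him : y * (2 * A * x + B) = 0 := by
    have := congrArg Complex.im hz
    simp [pow_two, Complex.mul_re, Complex.mul_im, Complex.add_im] at this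
    nlinarith [this]
  rcases mul_eq_zero.mp him with hy0 | hxB
  · rw [hy0] at hre
    nlinarith [mul_nonneg hApos.le (mul_nonneg h h), mul_nonneg hBpos.le h]
  · nlinarith
end

section
/- For I*_M(μ_M) = Λ_M (β_MT β_TM − μ_M μ_T)/(μ_M β_MT (μ_M + β_TM)), the normalized sensitivity index (μ_M/I*_M)·(dI*_M/dμ_M) equals −(β_MT β_TM^2 + 2 β_MT β_TM μ_M − μ_T μ_M^2)/((β_TM + μ_M)(β_MT β_TM − μ_M μ_T)), which is strictly negative when β_MT β_TM > μ_M μ_T. -/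
/-!
The sensitivity index is the logarithmic derivative `x f'(x) / f(x)`, so it turns products and
quotients into sums and differences. For `I(m) = Λ (a - m μT) / ((m βMT) (m + βTM))` with
`a = βMT βTM` this gives `-m μT / (a - m μT) - 1 - m / (m + βTM)`, whose common denominator
is the one in the claimed formula. The numerator `a βTM + 2 a m - μT m²` is positive because
`a m > μT m²`.
-/

noncomputable def sensitivityIndex (f : ℝ → ℝ) (x : ℝ) : ℝ := x / f x * deriv f x

namespace sensitivityIndex

variable {f g : ℝ → ℝ} {x : ℝ}

theorem mul (hf : DifferentiableAt ℝ f x) (hg : DifferentiableAt ℝ g x)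
    (hfx : f x ≠ 0) (hgx : g x ≠ 0) :
    sensitivityIndex (fun y => f y * g y) x = sensitivityIndex f x + sensitivityIndex g x := by
  simp only [sensitivityIndex, deriv_fun_mul hf hg]
  field_simp

theorem div (hf : DifferentiableAt ℝ f x) (hg : DifferentiableAt ℝ g x)
    (hfx : f x ≠ 0) (hgx : g x ≠ 0) :
    sensitivityIndex (fun y => f y / g y) x = sensitivityIndex f x - sensitivityIndex g x := by
  simp only [sensitivityIndex, deriv_fun_div hf hg hgx]
  field_simp

theorem const_mul {c : ℝ} (hc : c ≠ 0) :
    sensitivityIndex (fun y => c * f y) x = sensitivityIndex f x := by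
  simp only [sensitivityIndex, deriv_const_mul_field']
  by_cases hfx : f x = 0
  · simp [hfx]
  · field_simp

theorem mul_const_id {c : ℝ} (hc : c ≠ 0) (hx : x ≠ 0) :
    sensitivityIndex (fun y => y * c) x = 1 := by
  simp only [sensitivityIndex, deriv_mul_const_field', deriv_id'']
  field_simp

theorem id_add_const (c : ℝ) : sensitivityIndex (fun y => y + c) x = x / (x + c) := by
  simp [sensitivityIndex]

theorem const_sub_mul (a c : ℝ) :
    sensitivityIndex (fun y => a - y * c) x = -(x * c) / (a - x * c) := by
  simp only [sensitivityIndex, deriv_const_sub, deriv_mul_const_field', deriv_id'']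
  ring

end sensitivityIndex

theorem SI_IM_muM_general
    (ΛM βMT βTM μM μT : ℝ)
    (hΛM : 0 < ΛM) (hβMT : 0 < βMT) (hβTM : 0 < βTM)
    (hμM : 0 < μM)
    (hR0 : βMT * βTM > μM * μT) :
    (μM / (ΛM * (βMT * βTM - μM * μT) / (μM * βMT * (μM + βTM)))) *
      deriv (fun m => ΛM * (βMT * βTM - m * μT) / (m * βMT * (m + βTM))) μM
      = -(βMT * βTM ^ 2 + 2 * βMT * βTM * μM - μT * μM ^ 2) /
          ((βTM + μM) * (βMT * βTM - μM * μT)) ∧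
    -(βMT * βTM ^ 2 + 2 * βMT * βTM * μM - μT * μM ^ 2) /
        ((βTM + μM) * (βMT * βTM - μM * μT)) < 0 := by
  have hR : 0 < βMT * βTM - μM * μT := sub_pos.mpr hR0
  have hSI : sensitivityIndex (fun m => ΛM * (βMT * βTM - m * μT) / (m * βMT * (m + βTM))) μM
      = -(μM * μT) / (βMT * βTM - μM * μT) - 1 - μM / (μM + βTM) := by
    rw [sensitivityIndex.div (by fun_prop) (by fun_prop) (by positivity) (by positivity),
      sensitivityIndex.const_mul hΛM.ne', sensitivityIndex.const_sub_mul,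
      sensitivityIndex.mul (by fun_prop) (by fun_prop) (by positivity) (by positivity),
      sensitivityIndex.mul_const_id hβMT.ne' hμM.ne', sensitivityIndex.id_add_const]
    ring
  have hnum : 0 < βMT * βTM ^ 2 + 2 * βMT * βTM * μM - μT * μM ^ 2 := by
    nlinarith [mul_lt_mul_of_pos_right hR0 hμM, mul_pos (mul_pos hβMT hβTM) hμM,
      mul_pos (mul_pos hβMT hβTM) hβTM]
  refine ⟨?_, div_neg_of_neg_of_pos (neg_neg_of_pos hnum) (by positivity)⟩
  rw [sensitivityIndex] at hSI
  rw [hSI]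
  field_simp
  ring

/-- The normalized sensitivity index of I*_M with respect to μM equals
−(βMT βTM² + 2 βMT βTM μM − μT μM²)/((βTM + μM)(βMT βTM − μM μT)),
which is strictly negative when βMT βTM > μM μT. -/
theorem SI_IM_muM
    (ΛM βMT βTM μM μT : ℝ)
    (hΛM : 0 < ΛM) (hβMT : 0 < βMT) (hβTM : 0 < βTM)
    (hμM : 0 < μM) (hμT : 0 < μT)
    (hR0 : βMT * βTM > μM * μT) :
    (μM / (ΛM * (βMT * βTM - μM * μT) / (μM * βMT * (μM + βTM)))) *
      deriv (fun m => ΛM * (βMT * βTM - m * μT) / (m * βMT * (m + βTM))) μM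
      = -(βMT * βTM ^ 2 + 2 * βMT * βTM * μM - μT * μM ^ 2) /
          ((βTM + μM) * (βMT * βTM - μM * μT)) ∧
    -(βMT * βTM ^ 2 + 2 * βMT * βTM * μM - μT * μM ^ 2) /
        ((βTM + μM) * (βMT * βTM - μM * μT)) < 0 :=
  SI_IM_muM_general ΛM βMT βTM μM μT hΛM hβMT hβTM hμM hR0
end
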